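/- arXiv:2309.07843 — 2 statements merged into one kernel-verified Lean document; each statement's English description precedes it below -/
import Mathlib

section
/- Fix u ∈ ℂ and reals σ ≠ 0, κ, τ > 0 and ρ₀ ∈ ℝ. Set α̂ = -(1/2)·u·(u + i), γ = σ²/2, and β(ρ) = κ - i·u·σ·ρ for ρ ∈ ℝ. Let d : ℝ → ℂ satisfy HasDerivAt d (-i·u·σ·β(ρ₀)/d(ρ₀)) ρ₀ with d(ρ₀) ≠ 0 and β(ρ₀) + d(ρ₀) ≠ 0, and define g(ρ) = (β(ρ) - d(ρ))/(β(ρ) + d(ρ)). Write β, d, g for the values at ρ₀, and assume g ≠ 1, g·exp(-d·τ) - 1 ≠ 0, and that (g·exp(-d·τ) - 1)/(g - 1) lies in the slit plane. Then the function ρ ↦ Log((g(ρ)·exp(-d(ρ)·τ) - 1)/(g(ρ) - 1)) has derivative at ρ₀ equal to (i·u·σ·g/d)·( exp(-d·τ)·(2 + τ·β)/(g·exp(-d·τ) - 1) - 2/(g - 1) ). -/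
/-!
With `c = i u σ` we have `β' = -c` and `d d' = β β'`, which makes `g' = 2 c g / d`, while
`(e^{-dτ})' = (c β τ / d) e^{-dτ}`. The logarithmic derivative of a quotient `N / D` is
`N'/N - D'/D`, and with `N = g e^{-dτ} - 1`, `D = g - 1` this is the claimed expression.
-/

open Complex

/-- The hypothesis on `d` says `d d' = b b'`, as for `d = √(b² - const)`; then
`b' d - b d' = b' (d² - b²) / d` and the quotient rule collapses. -/
theorem HasDerivAt.sub_div_add_of_hasDerivAt_sqrt {𝕜 𝕜' : Type*} [NontriviallyNormedField 𝕜]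
    [NontriviallyNormedField 𝕜'] [NormedAlgebra 𝕜 𝕜'] {b d : 𝕜 → 𝕜'} {b' : 𝕜'} {x : 𝕜}
    (hb : HasDerivAt b b' x)
    (hd : HasDerivAt d (b x * b' / d x) x) (hd0 : d x ≠ 0) (hbd : b x + d x ≠ 0) :
    HasDerivAt (fun y => (b y - d y) / (b y + d y))
      (-2 * b' / d x * ((b x - d x) / (b x + d x))) x := by
  refine ((hb.sub hd).fun_div (hb.add hd) hbd).congr_deriv ?_
  simp only [Pi.sub_apply, Pi.add_apply]
  field_simp
  ring

theorem HasDerivAt.clog_div {f g : ℝ → ℂ} {f' g' : ℂ} {x : ℝ} (hf : HasDerivAt f f' x)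
    (hg : HasDerivAt g g' x) (hf0 : f x ≠ 0) (hg0 : g x ≠ 0) (hfg : f x / g x ∈ slitPlane) :
    HasDerivAt (fun t => Complex.log (f t / g t)) (f' / f x - g' / g x) x := by
  refine (HasDerivAt.clog_real (hf.fun_div hg hg0) hfg).congr_deriv ?_
  field_simp

theorem heston_log_deriv_rho_general (u : ℂ) (σ κ τ ρ₀ : ℝ)
    (β : ℝ → ℂ) (hβ : ∀ ρ : ℝ, β ρ = (κ : ℂ) - Complex.I * u * σ * ρ)
    (d : ℝ → ℂ) (hd : HasDerivAt d (-Complex.I * u * σ * β ρ₀ / d ρ₀) ρ₀)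
    (hd0 : d ρ₀ ≠ 0) (hβd : β ρ₀ + d ρ₀ ≠ 0)
    (g : ℝ → ℂ) (hg : ∀ ρ : ℝ, g ρ = (β ρ - d ρ) / (β ρ + d ρ))
    (hg1 : g ρ₀ ≠ 1)
    (hden : g ρ₀ * Complex.exp (-(d ρ₀) * τ) - 1 ≠ 0)
    (hslit : (g ρ₀ * Complex.exp (-(d ρ₀) * τ) - 1) / (g ρ₀ - 1) ∈ Complex.slitPlane) :
    HasDerivAt (fun ρ : ℝ =>
        Complex.log ((g ρ * Complex.exp (-(d ρ) * τ) - 1) / (g ρ - 1)))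
      ((Complex.I * u * σ * g ρ₀ / d ρ₀) *
        (Complex.exp (-(d ρ₀) * τ) * (2 + (τ : ℂ) * β ρ₀)
            / (g ρ₀ * Complex.exp (-(d ρ₀) * τ) - 1)
          - 2 / (g ρ₀ - 1))) ρ₀ := by
  have hβ' : HasDerivAt β (-(I * u * σ)) ρ₀ := by
    rw [funext hβ]
    simpa using ((hasDerivAt_id ρ₀).ofReal_comp.const_mul (I * u * σ)).const_sub (κ : ℂ)
  have hg' : HasDerivAt g (2 * (I * u * σ) / d ρ₀ * g ρ₀) ρ₀ := by
    rw [funext hg]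
    refine (hβ'.sub_div_add_of_hasDerivAt_sqrt ?_ hd0 hβd).congr_deriv ?_
    · exact hd.congr_deriv (by ring)
    · ring
  have hE : HasDerivAt (fun ρ => exp (-(d ρ) * τ))
      (exp (-(d ρ₀) * τ) * (I * u * σ * β ρ₀ * τ / d ρ₀)) ρ₀ := by
    refine (hd.neg.mul_const (τ : ℂ)).cexp.congr_deriv ?_
    simp only [Pi.neg_apply]
    ring
  refine (HasDerivAt.clog_div ((hg'.mul hE).sub_const 1) (hg'.sub_const 1) hden
    (sub_ne_zero.2 hg1) hslit).congr_deriv ?_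
  simp only [Pi.mul_apply]
  field_simp

/-- Derivative with respect to `ρ` of `Log((g e^{-dτ} - 1)/(g - 1))`
(Appendix B.7 of the paper). -/
theorem heston_log_deriv_rho (u : ℂ) (σ κ τ ρ₀ : ℝ) (hσ : σ ≠ 0) (hτ : 0 < τ)
    (β : ℝ → ℂ) (hβ : ∀ ρ : ℝ, β ρ = (κ : ℂ) - Complex.I * u * σ * ρ)
    (d : ℝ → ℂ) (hd : HasDerivAt d (-Complex.I * u * σ * β ρ₀ / d ρ₀) ρ₀)
    (hd0 : d ρ₀ ≠ 0) (hβd : β ρ₀ + d ρ₀ ≠ 0)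
    (g : ℝ → ℂ) (hg : ∀ ρ : ℝ, g ρ = (β ρ - d ρ) / (β ρ + d ρ))
    (hg1 : g ρ₀ ≠ 1)
    (hden : g ρ₀ * Complex.exp (-(d ρ₀) * τ) - 1 ≠ 0)
    (hslit : (g ρ₀ * Complex.exp (-(d ρ₀) * τ) - 1) / (g ρ₀ - 1) ∈ Complex.slitPlane) :
    HasDerivAt (fun ρ : ℝ =>
        Complex.log ((g ρ * Complex.exp (-(d ρ) * τ) - 1) / (g ρ - 1)))
      ((Complex.I * u * σ * g ρ₀ / d ρ₀) *
        (Complex.exp (-(d ρ₀) * τ) * (2 + (τ : ℂ) * β ρ₀)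
            / (g ρ₀ * Complex.exp (-(d ρ₀) * τ) - 1)
          - 2 / (g ρ₀ - 1))) ρ₀ :=
  heston_log_deriv_rho_general u σ κ τ ρ₀ β hβ d hd hd0 hβd g hg hg1 hden hslit
end

section
/- Fix u ∈ ℂ and reals κ, ρ, τ > 0 and σ₀ ∈ ℝ with σ₀ ≠ 0. Set α̂ = -(1/2)·u·(u + i), and for σ ∈ ℝ set β(σ) = κ - i·u·σ·ρ and γ(σ) = σ²/2. Let d : ℝ → ℂ satisfy HasDerivAt d (-(i·u·ρ·β(σ₀) + 2·α̂·σ₀)/d(σ₀)) σ₀ with d(σ₀) ≠ 0 and β(σ₀) + d(σ₀) ≠ 0, and define g(σ) = (β(σ) - d(σ))/(β(σ) + d(σ)). Write β, d, g for the values at σ₀, and assume g ≠ 1, g·exp(-d·τ) - 1 ≠ 0, and that (g·exp(-d·τ) - 1)/(g - 1) lies in the slit plane. Then the function σ ↦ Log((g(σ)·exp(-d(σ)·τ) - 1)/(g(σ) - 1)) has derivative at σ₀ equal to ( (2·i·u·ρ·(β² - d²) + 4·β·α̂·σ₀)·( (g - 1)·exp(-d·τ) - g·exp(-d·τ) + 1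 ) + τ·g·(g - 1)·exp(-d·τ)·(β + d)²·(i·u·ρ·β + 2·α̂·σ₀) ) / ( d·(β + d)²·(g - 1)·(g·exp(-d·τ) - 1) ). -/
/-!
By the quotient rule, `g' = 2 (β' d - β d') / (β + d)²` with `β' = -iuρ`; with the given `d'`
this is `(2iuρ(β² - d²) + 4βα̂σ₀) / (d (β + d)²)`. Writing `E = exp (-dτ)`, the logarithmic
derivative of `(gE - 1) / (g - 1)` collapses to `(g' (1 - E) - τ g (g - 1) d' E) / ((g - 1)(gE - 1))`,
and substituting `g'` and `d'` gives Equation (42).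
-/

open Complex

theorem HasDerivAt.sub_div_add {𝕜 𝕜' : Type*} [NontriviallyNormedField 𝕜]
    [NontriviallyNormedField 𝕜'] [NormedAlgebra 𝕜 𝕜'] {f d : 𝕜 → 𝕜'} {f' d' : 𝕜'} {x : 𝕜}
    (hf : HasDerivAt f f' x) (hd : HasDerivAt d d' x) (hfd : f x + d x ≠ 0) :
    HasDerivAt (fun y => (f y - d y) / (f y + d y))
      (2 * (f' * d x - f x * d') / (f x + d x) ^ 2) x := by
  refine ((hf.sub hd).div (hf.add hd) hfd).congr_deriv ?_
  simp only [Pi.add_apply, Pi.sub_apply]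
  ring

theorem HasDerivAt.clog_mul_exp_sub_one_div {g d : ℝ → ℂ} {g' d' τ : ℂ} {x : ℝ}
    (hg : HasDerivAt g g' x) (hd : HasDerivAt d d' x)
    (hslit : (g x * Complex.exp (-d x * τ) - 1) / (g x - 1) ∈ slitPlane) :
    HasDerivAt (fun y => Complex.log ((g y * Complex.exp (-d y * τ) - 1) / (g y - 1)))
      ((g' * (1 - Complex.exp (-d x * τ)) - τ * g x * (g x - 1) * d' * Complex.exp (-d x * τ))
        / ((g x - 1) * (g x * Complex.exp (-d x * τ) - 1))) x := by
  -- the slit plane omits `0`, and `a / 0 = 0`, so neither factor of the quotient vanishes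
  obtain ⟨hnum, hden⟩ := div_ne_zero_iff.mp (slitPlane_ne_zero hslit)
  have hexp : HasDerivAt (fun y => Complex.exp (-d y * τ)) (Complex.exp (-d x * τ) * (-d' * τ)) x :=
    (hd.neg.mul_const τ).cexp
  refine ((((hg.mul hexp).sub_const 1).div (hg.sub_const 1) hden).clog_real hslit).congr_deriv ?_
  simp only [Pi.mul_apply, Pi.div_apply]
  field_simp
  ring

theorem heston_log_deriv_sigma_general (u : ℂ) (κ ρ τ σ₀ : ℝ)
    (α : ℂ)
    (β : ℝ → ℂ) (hβ : ∀ σ : ℝ, β σ = (κ : ℂ) - Complex.I * u * σ * ρ)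
    (d : ℝ → ℂ)
    (hd : HasDerivAt d (-(Complex.I * u * ρ * β σ₀ + 2 * α * σ₀) / d σ₀) σ₀)
    (hd0 : d σ₀ ≠ 0) (hβd : β σ₀ + d σ₀ ≠ 0)
    (g : ℝ → ℂ) (hg : ∀ σ : ℝ, g σ = (β σ - d σ) / (β σ + d σ))
    (hslit : (g σ₀ * Complex.exp (-(d σ₀) * τ) - 1) / (g σ₀ - 1) ∈ Complex.slitPlane) :
    HasDerivAt (fun σ : ℝ =>
        Complex.log ((g σ * Complex.exp (-(d σ) * τ) - 1) / (g σ - 1)))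
      (((2 * Complex.I * u * ρ * (β σ₀ ^ 2 - d σ₀ ^ 2) + 4 * β σ₀ * α * σ₀) *
          ((g σ₀ - 1) * Complex.exp (-(d σ₀) * τ)
            - g σ₀ * Complex.exp (-(d σ₀) * τ) + 1)
        + (τ : ℂ) * g σ₀ * (g σ₀ - 1) * Complex.exp (-(d σ₀) * τ)
            * (β σ₀ + d σ₀) ^ 2 * (Complex.I * u * ρ * β σ₀ + 2 * α * σ₀))
      / (d σ₀ * (β σ₀ + d σ₀) ^ 2 * (g σ₀ - 1)
          * (g σ₀ * Complex.exp (-(d σ₀) * τ) - 1))) σ₀ := by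
  have hβ' : HasDerivAt β (-(I * u * ρ)) σ₀ := by
    rw [funext hβ]
    refine (((hasDerivAt_id σ₀).ofReal_comp.const_mul (I * u)).mul_const (ρ : ℂ)).const_sub
      (κ : ℂ) |>.congr_deriv ?_
    push_cast
    ring
  obtain ⟨hnum, hden⟩ := div_ne_zero_iff.mp (slitPlane_ne_zero hslit)
  have hg' := hβ'.sub_div_add hd hβd
  rw [← funext hg] at hg'
  convert HasDerivAt.clog_mul_exp_sub_one_div hg' hd hslit using 1
  field_simp
  congr 1
  ring

/-- Derivative with respect to the vol-of-vol `σ` of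
`Log((g e^{-dτ} - 1)/(g - 1))` (Equation (42) of the paper). -/
theorem heston_log_deriv_sigma (u : ℂ) (κ ρ τ σ₀ : ℝ) (hτ : 0 < τ) (hσ₀ : σ₀ ≠ 0)
    (α : ℂ) (hα : α = -(1/2) * u * (u + Complex.I))
    (β : ℝ → ℂ) (hβ : ∀ σ : ℝ, β σ = (κ : ℂ) - Complex.I * u * σ * ρ)
    (d : ℝ → ℂ)
    (hd : HasDerivAt d (-(Complex.I * u * ρ * β σ₀ + 2 * α * σ₀) / d σ₀) σ₀)
    (hd0 : d σ₀ ≠ 0) (hβd : β σ₀ + d σ₀ ≠ 0)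
    (g : ℝ → ℂ) (hg : ∀ σ : ℝ, g σ = (β σ - d σ) / (β σ + d σ))
    (hg1 : g σ₀ ≠ 1)
    (hden : g σ₀ * Complex.exp (-(d σ₀) * τ) - 1 ≠ 0)
    (hslit : (g σ₀ * Complex.exp (-(d σ₀) * τ) - 1) / (g σ₀ - 1) ∈ Complex.slitPlane) :
    HasDerivAt (fun σ : ℝ =>
        Complex.log ((g σ * Complex.exp (-(d σ) * τ) - 1) / (g σ - 1)))
      (((2 * Complex.I * u * ρ * (β σ₀ ^ 2 - d σ₀ ^ 2) + 4 * β σ₀ * α * σ₀) *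
          ((g σ₀ - 1) * Complex.exp (-(d σ₀) * τ)
            - g σ₀ * Complex.exp (-(d σ₀) * τ) + 1)
        + (τ : ℂ) * g σ₀ * (g σ₀ - 1) * Complex.exp (-(d σ₀) * τ)
            * (β σ₀ + d σ₀) ^ 2 * (Complex.I * u * ρ * β σ₀ + 2 * α * σ₀))
      / (d σ₀ * (β σ₀ + d σ₀) ^ 2 * (g σ₀ - 1)
          * (g σ₀ * Complex.exp (-(d σ₀) * τ) - 1))) σ₀ :=
  heston_log_deriv_sigma_general u κ ρ τ σ₀ α β hβ d hd hd0 hβd g hg hslit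
end
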